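/- arXiv:1302.0580 — 5 statements merged into one kernel-verified Lean document; each statement's English description precedes it below -/
import Mathlib

section
/- There exists an equivalence relation U on ℕ that is recursively enumerable (as a set of pairs) such that every recursively enumerable equivalence relation E on ℕ is computably reducible to U. -/
/-!
The universal relation lives on codes `⟨e, x⟩`: its `e`-th block is the equivalence relation
generated by the `e`-th r.e. relation `W_e = {(x, y) | φ_e ⟨x, y⟩↓}`, so an r.e. equivalence
relation `E = W_e` reduces to it by `x ↦ ⟨e, x⟩`, and distinct blocks never interact.

It is r.e. because the equivalence closure of an r.e. relation is r.e.: approximate the relation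
by the monotone stages "`φ_e` halts within `s` steps"; by monotonicity a path in the closure is
witnessed by one stage `s` together with the finite list of its vertices, and that witness can
be checked primitive recursively.
-/

open Nat.Partrec (Code)
open Nat.Partrec.Code Encodable Denumerable Relation

def ComputablyReducible (E F : ℕ → ℕ → Prop) : Prop :=
  ∃ f : ℕ → ℕ, Computable f ∧ ∀ x y, E x y ↔ F (f x) (f y)

section Paths

variable {α : Type*}

theorem Relation.reflTransGen_exists_iff_of_directed {ι : Type*} [Nonempty ι]
    {r : ι → α → α → Prop} (hr : Directed (· ≤ ·) r) {a b : α} :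
    ReflTransGen (fun a b => ∃ i, r i a b) a b ↔ ∃ i, ReflTransGen (r i) a b := by
  refine ⟨fun h => ?_, fun ⟨i, h⟩ => ReflTransGen.mono (fun _ _ h => ⟨i, h⟩) _ _ h⟩
  induction h with
  | refl => exact ⟨Classical.arbitrary ι, .refl⟩
  | tail _ hbc ih =>
    obtain ⟨i, hab⟩ := ih
    obtain ⟨j, hbc⟩ := hbc
    obtain ⟨k, hik, hjk⟩ := hr i j
    exact ⟨k, (ReflTransGen.mono hik _ _ hab).tail (hjk _ _ hbc)⟩

def chainEnd (q : α → α → Bool) (x : α) (l : List α) : α × Bool :=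
  l.foldl (fun acc b => (b, acc.2 && q acc.1 b)) (x, true)

theorem foldl_chainEnd_eq_iff (q : α → α → Bool) (l : List α) (x y : α) (ok : Bool) :
    l.foldl (fun acc b => (b, acc.2 && q acc.1 b)) (x, ok) = (y, true) ↔
      ok = true ∧ (x :: l).IsChain (q · · = true) ∧
        (x :: l).getLast (List.cons_ne_nil x l) = y := by
  induction l generalizing x ok with
  | nil => simp [and_comm]
  | cons b l ih => simp [ih, List.isChain_cons_cons, and_assoc]

theorem reflTransGen_iff_exists_chainEnd (q : α → α → Bool) (x y : α) :
    ReflTransGen (q · · = true) x y ↔ ∃ l, chainEnd q x l = (y, true) := by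
  simp only [chainEnd, foldl_chainEnd_eq_iff, true_and]
  exact ⟨List.exists_isChain_cons_of_relationReflTransGen,
    fun ⟨l, hl, hy⟩ => List.relationReflTransGen_of_exists_isChain_cons l hl hy⟩

end Paths

section REPred

variable {α : Type*} [Primcodable α]

theorem PrimrecRel.rePred_exists {β : Type*} [Primcodable β] {q : α → β → Prop}
    (hq : PrimrecRel q) : REPred fun a => ∃ b, q a b := by
  classical
  have hguard : PrimrecRel fun (x : (α × ℕ) × β) (b : β) => q x.1.1 b :=
    PrimrecRel.comp hq (Primrec.fst.comp (Primrec.fst.comp Primrec.fst)) Primrec.snd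
  have hsearch : Primrec₂ fun (a : α) (n : ℕ) =>
      (decode (α := β) n).bind fun b => Option.guard (fun b => decide (q a b)) b :=
    Primrec.option_bind (Primrec.decode.comp Primrec.snd) (Primrec.option_guard hguard Primrec.snd)
  refine (Partrec.rfindOpt hsearch.to_comp).dom_re.of_eq fun a => ?_
  rw [Nat.rfindOpt_dom]
  constructor
  · rintro ⟨n, b, hb⟩
    simp only [Option.mem_def, Option.bind_eq_some_iff, Option.guard_eq_some_iff] at hb
    obtain ⟨b, -, -, hb⟩ := hb
    exact ⟨b, of_decide_eq_true hb⟩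
  · rintro ⟨b, hb⟩
    exact ⟨encode b, b, by simp [hb]⟩

theorem REPred.exists_code {p : α → Prop} (hp : REPred p) :
    ∃ c : Code, ∀ a, p a ↔ (eval c (encode a)).Dom := by
  obtain ⟨c, hc⟩ := Nat.Partrec.Code.exists_code.1 hp
  refine ⟨c, fun a => ?_⟩
  simp only [hc, encodek, Part.coe_some, Part.bind_some]
  exact ⟨fun h => ⟨h, trivial⟩, fun h => h.1⟩

theorem REPred.exists_monotone_primrecRel {p : α → Prop} (hp : REPred p) :
    ∃ q : ℕ → α → Prop, PrimrecRel q ∧ Monotone q ∧ ∀ a, p a ↔ ∃ s, q s a := by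
  obtain ⟨c, hc⟩ := hp.exists_code
  refine ⟨fun s a => (evaln s c (encode a)).isSome, ?_, ?_, fun a => ?_⟩
  · exact PrimrecRel.comp Primrec.eq (Primrec.option_isSome.comp <| primrec_evaln.comp <|
      (Primrec.pair Primrec.fst (Primrec.const c)).pair (Primrec.encode.comp Primrec.snd))
      (Primrec.const true)
  · intro s t hst a h
    obtain ⟨x, hx⟩ := Option.isSome_iff_exists.1 h
    exact Option.isSome_iff_exists.2 ⟨x, evaln_mono hst hx⟩
  · simp only [hc, Part.dom_iff_mem, evaln_complete, Option.isSome_iff_exists, Option.mem_def]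
    exact exists_comm

theorem REPred.or {p q : α → Prop} (hp : REPred p) (hq : REPred q) :
    REPred fun a => p a ∨ q a := by
  obtain ⟨P, hP, -, hpP⟩ := hp.exists_monotone_primrecRel
  obtain ⟨Q, hQ, -, hqQ⟩ := hq.exists_monotone_primrecRel
  have hPQ : PrimrecRel fun a s => P s a ∨ Q s a :=
    (PrimrecRel.comp hP Primrec.snd Primrec.fst).or (PrimrecRel.comp hQ Primrec.snd Primrec.fst)
  exact (PrimrecRel.rePred_exists hPQ).of_eq fun a => by rw [hpP, hqQ, exists_or]

theorem REPred.reflTransGen {r : α → α → Prop} (hr : REPred fun p : α × α => r p.1 p.2) :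
    REPred fun p : α × α => ReflTransGen r p.1 p.2 := by
  classical
  obtain ⟨q, hq, hmono, hrq⟩ := hr.exists_monotone_primrecRel
  have hdir : Directed (· ≤ ·) fun s a b => q s (a, b) :=
    Monotone.directed_le fun s t hst a b => hmono hst (a, b)
  have hpath : ∀ x y, ReflTransGen r x y ↔
      ∃ sl : ℕ × List α, chainEnd (fun a b => decide (q sl.1 (a, b))) x sl.2 = (y, true) := by
    intro x y
    have hr' : r = fun a b => ∃ s, q s (a, b) := by funext a b; exact propext (hrq (a, b))
    rw [hr', Relation.reflTransGen_exists_iff_of_directed hdir, Prod.exists]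
    refine exists_congr fun s => ?_
    simpa using reflTransGen_iff_exists_chainEnd (fun a b => decide (q s (a, b))) x y
  refine (PrimrecRel.rePred_exists ?_).of_eq fun p => (hpath p.1 p.2).symm
  open Primrec in
  have hstep : Primrec₂ fun (z : (α × α) × (ℕ × List α)) (accb : (α × Bool) × α) =>
      (accb.2, accb.1.2 && decide (q z.2.1 (accb.1.1, accb.2))) :=
    pair (snd.comp snd) (Primrec.and.comp (snd.comp (fst.comp snd))
      (PrimrecRel.comp hq (fst.comp (snd.comp fst))
        (pair (fst.comp (fst.comp snd)) (snd.comp snd))).decide)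
  open Primrec in
  exact PrimrecRel.comp Primrec.eq
    (list_foldl (snd.comp snd) (pair (fst.comp fst) (const true)) hstep)
    (pair (snd.comp fst) (const true))

theorem REPred.eqvGen {r : α → α → Prop} (hr : REPred fun p : α × α => r p.1 p.2) :
    REPred fun p : α × α => EqvGen r p.1 p.2 := by
  have hswap : REPred fun p : α × α => r p.2 p.1 :=
    Partrec.comp hr (Computable.snd.pair Computable.fst)
  refine (REPred.reflTransGen (r := SymmGen r) (hr.or hswap)).of_eq fun p => ?_
  rw [EqvGen.reflTransGen_symmGen]

end REPred

section Universal

def universalBase (m n : ℕ) : Prop :=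
  m.unpair.1 = n.unpair.1 ∧ (eval (ofNat Code m.unpair.1) (Nat.pair m.unpair.2 n.unpair.2)).Dom

def universalCeer : ℕ → ℕ → Prop := EqvGen universalBase

theorem rePred_universalBase : REPred fun p : ℕ × ℕ => universalBase p.1 p.2 := by
  open Primrec in
  have h : Partrec fun p : ℕ × ℕ => cond (decide (p.1.unpair.1 = p.2.unpair.1))
      (eval (ofNat Code p.1.unpair.1) (Nat.pair p.1.unpair.2 p.2.unpair.2)) Part.none :=
    Partrec.cond (PrimrecRel.comp Primrec.eq (fst.comp (unpair.comp fst))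
        (fst.comp (unpair.comp snd))).decide.to_comp
      (eval_part.comp ((Primrec.ofNat Code).comp (fst.comp (unpair.comp fst))).to_comp
        (Primrec₂.natPair.comp (snd.comp (unpair.comp fst)) (snd.comp (unpair.comp snd))).to_comp)
      Partrec.none
  refine h.dom_re.of_eq fun p => ?_
  by_cases hp : p.1.unpair.1 = p.2.unpair.1 <;> simp [universalBase, hp]

theorem eqvGen_universalBase_pair_iff (e x y : ℕ) :
    EqvGen universalBase (Nat.pair e x) (Nat.pair e y) ↔
      EqvGen (fun a b => (eval (ofNat Code e) (Nat.pair a b)).Dom) x y := by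
  constructor
  · suffices H : ∀ m n, EqvGen universalBase m n → m.unpair.1 = n.unpair.1 ∧
        EqvGen (fun a b => (eval (ofNat Code m.unpair.1) (Nat.pair a b)).Dom)
          m.unpair.2 n.unpair.2 from
      fun h => by simpa using (H _ _ h).2
    intro m n h
    induction h with
    | rel m n h => exact ⟨h.1, .rel _ _ h.2⟩
    | refl m => exact ⟨rfl, .refl _⟩
    | symm m n _ ih => exact ⟨ih.1.symm, ih.1 ▸ ih.2.symm⟩
    | trans m n k _ _ ih₁ ih₂ => exact ⟨ih₁.1.trans ih₂.1, ih₁.2.trans _ _ _ (ih₁.1 ▸ ih₂.2)⟩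
  · intro h
    induction h with
    | rel a b h => exact .rel _ _ ⟨by simp, by simpa using h⟩
    | refl a => exact .refl _
    | symm a b _ ih => exact ih.symm
    | trans a b c _ _ ih₁ ih₂ => exact ih₁.trans _ _ _ ih₂

theorem computablyReducible_universalCeer {E : ℕ → ℕ → Prop} (hE : Equivalence E)
    (hre : REPred fun p : ℕ × ℕ => E p.1 p.2) : ComputablyReducible E universalCeer := by
  obtain ⟨c, hc⟩ := hre.exists_code
  have hcE : (fun a b => (eval c (Nat.pair a b)).Dom) = E :=
    funext₂ fun a b => propext (by simpa using (hc (a, b)).symm)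
  refine ⟨Nat.pair (encode c), (Primrec₂.natPair.comp (Primrec.const _) Primrec.id).to_comp,
    fun x y => ?_⟩
  rw [universalCeer, eqvGen_universalBase_pair_iff, Denumerable.ofNat_encode, hcE, hE.eqvGen_iff]

end Universal

/-- There is an r.e. equivalence relation to which every r.e. equivalence
relation is computably reducible. -/
theorem stmt_1 :
    ∃ U : ℕ → ℕ → Prop, Equivalence U ∧ REPred (fun p : ℕ × ℕ => U p.1 p.2) ∧
      ∀ E : ℕ → ℕ → Prop, Equivalence E → REPred (fun p : ℕ × ℕ => E p.1 p.2) →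
        ComputablyReducible E U :=
  ⟨universalCeer, EqvGen.is_equivalence _, rePred_universalBase.eqvGen,
    fun _ hE hre => computablyReducible_universalCeer hE hre⟩
end

section
/- For every Π⁰₁ equivalence relation E on ℕ there is a total computable function f : ℕ → ℕ → ℕ such that for all x, y: E x y ↔ ∀ n, f x n = f y n. -/
/-!
The relations `E_s x y :⇔ ∀ t ≤ s, R x y t ∧ R y x t` (the field `rel` of `Pi01Approx`) are
computable, symmetric, decrease in `s`, and intersect to `E`. Every pair in a window `[0, m]` is
settled at some stage, so there is a least stage `≥ m` at which `E_s` is transitive on `[0, m]`;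
there it is an equivalence relation on the window, and `rep m v` is the least element of the
class of `v`. Since these stages increase with `m` while `E_s` decreases, `rep m ∘ rep b = rep m`
on `[0, m]` for `m ≤ b`.

Column `n` sends `v ≤ n` to `rep n v`; a larger `v` is replaced by `rep v v` repeatedly until it
falls into `[0, n]`, or is returned once it is its own `rep v v`. If `x < y` are equivalent, the
descent from `y` passes through `rep y y = rep y x`, whose columns agree with those of `x` by the
coherence of `rep`. If `¬ E x y` is witnessed at stage `s`, the columns differ at every
`n ≥ x, y, s`, since `rep n` works at a stage beyond `s`.
-/

/-- A binary relation on ℕ is Π⁰₁. -/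
def Pi01Rel (E : ℕ → ℕ → Prop) : Prop :=
  ∃ R : ℕ → ℕ → ℕ → Bool,
    Computable (fun p : ℕ × ℕ × ℕ => R p.1 p.2.1 p.2.2) ∧
    ∀ x y, E x y ↔ ∀ t, R x y t = true

open Filter Computable

namespace ComputablePred

variable {α β : Type*} [Primcodable α] [Primcodable β]

theorem comp {p : β → Prop} {f : α → β} (hp : ComputablePred p) (hf : Computable f) :
    ComputablePred fun a => p (f a) :=
  let ⟨_, hp⟩ := hp
  ⟨_, hp.comp hf⟩

theorem and {p q : α → Prop} (hp : ComputablePred p) (hq : ComputablePred q) :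
    ComputablePred fun a => p a ∧ q a := by
  classical
  exact Computable.computablePred <|
    ((Primrec.dom_bool₂ (· && ·)).to_comp.comp hp.decide hq.decide).of_eq fun a => by simp

theorem imp {p q : α → Prop} (hp : ComputablePred p) (hq : ComputablePred q) :
    ComputablePred fun a => p a → q a := by
  classical
  exact Computable.computablePred <|
    ((Primrec.dom_bool₂ fun b c => !b || c).to_comp.comp hp.decide hq.decide).of_eq
      fun a => by by_cases p a <;> simp [*]

theorem forall_le {p : α → ℕ → Prop} {k : α → ℕ}
    (hp : ComputablePred fun x : α × ℕ => p x.1 x.2) (hk : Computable k) :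
    ComputablePred fun a => ∀ t ≤ k a, p a t := by
  classical
  have hstep : Computable fun x : α × ℕ × Bool => x.2.2 && decide (p x.1 (x.2.1 + 1)) :=
    (Primrec.dom_bool₂ (· && ·)).to_comp.comp (snd.comp snd)
      (hp.decide.comp (fst.pair (succ.comp (fst.comp snd))))
  refine Computable.computablePred <|
    (nat_rec hk (hp.decide.comp (Computable.id.pair (const 0))) hstep.to₂).of_eq fun a => ?_
  induction k a with
  | zero => simp
  | succ n ih =>
    dsimp only at ih ⊢
    rw [ih]
    simp [Nat.le_succ_iff_eq_or_le, Bool.and_comm]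

end ComputablePred

structure Pi01Approx (E : ℕ → ℕ → Prop) where
  rel : ℕ → ℕ → ℕ → Prop
  computablePred_rel : ComputablePred fun q : ℕ × ℕ × ℕ => rel q.1 q.2.1 q.2.2
  equivalence : Equivalence E
  rel_symm {s x y : ℕ} : rel s x y → rel s y x
  rel_anti {s s' x y : ℕ} : s ≤ s' → rel s' x y → rel s x y
  iff_forall_rel {x y : ℕ} : E x y ↔ ∀ s, rel s x y

theorem Pi01Rel.nonempty_pi01Approx {E : ℕ → ℕ → Prop} (hE : Pi01Rel E)
    (hEquiv : Equivalence E) : Nonempty (Pi01Approx E) := by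
  obtain ⟨R, hR, hRE⟩ := hE
  have hR' : ComputablePred fun q : ℕ × ℕ × ℕ => R q.1 q.2.1 q.2.2 = true :=
    ⟨inferInstance, by simpa using hR⟩
  refine ⟨{
    rel := fun s x y => ∀ t ≤ s, R x y t = true ∧ R y x t = true
    computablePred_rel := ?_
    equivalence := hEquiv
    rel_symm := fun h t ht => (h t ht).symm
    rel_anti := fun hss' h t ht => h t (ht.trans hss')
    iff_forall_rel := fun {x y} =>
      ⟨fun h _ t _ => ⟨(hRE x y).1 h t, (hRE y x).1 (hEquiv.symm h) t⟩,
        fun h => (hRE x y).2 fun t => (h t t le_rfl).1⟩ }⟩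
  have hx : Computable fun p : (ℕ × ℕ × ℕ) × ℕ => p.1.2.1 := fst.comp (snd.comp fst)
  have hy : Computable fun p : (ℕ × ℕ × ℕ) × ℕ => p.1.2.2 := snd.comp (snd.comp fst)
  exact .forall_le ((hR'.comp (hx.pair (hy.pair snd))).and (hR'.comp (hy.pair (hx.pair snd))))
    fst

namespace Pi01Approx

variable {E : ℕ → ℕ → Prop} (a : Pi01Approx E)

open Classical

theorem rel_refl (s x : ℕ) : a.rel s x x :=
  a.iff_forall_rel.1 (a.equivalence.refl x) s

theorem eventually_rel_iff (x y : ℕ) : ∀ᶠ s in atTop, a.rel s x y ↔ E x y := by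
  by_cases h : E x y
  · exact .of_forall fun s => iff_of_true (a.iff_forall_rel.1 h s) h
  · obtain ⟨s₀, hs₀⟩ := not_forall.1 (mt a.iff_forall_rel.2 h)
    exact eventually_atTop.2 ⟨s₀, fun s hs => iff_of_false (fun hr => hs₀ (a.rel_anti hs hr)) h⟩

def IsTransOn (m s : ℕ) : Prop :=
  ∀ x ≤ m, ∀ y ≤ m, ∀ z ≤ m, a.rel s x y → a.rel s y z → a.rel s x z

theorem exists_isTransOn (m : ℕ) : ∃ s, m ≤ s ∧ a.IsTransOn m s := by
  have hfin := Set.finite_Iic m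
  have h : ∀ᶠ s in atTop, ∀ x ∈ Set.Iic m, ∀ y ∈ Set.Iic m, a.rel s x y ↔ E x y :=
    hfin.eventually_all.2 fun x _ => hfin.eventually_all.2 fun y _ => a.eventually_rel_iff x y
  obtain ⟨s, hms, hs⟩ := ((eventually_ge_atTop m).and h).exists
  refine ⟨s, hms, fun x hx y hy z hz hxy hyz => ?_⟩
  exact (hs x hx z hz).2 (a.equivalence.trans ((hs x hx y hy).1 hxy) ((hs y hy z hz).1 hyz))

noncomputable def stage (m : ℕ) : ℕ := Nat.find (a.exists_isTransOn m)

theorem le_stage (m : ℕ) : m ≤ a.stage m := (Nat.find_spec (a.exists_isTransOn m)).1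

theorem isTransOn_stage (m : ℕ) : a.IsTransOn m (a.stage m) :=
  (Nat.find_spec (a.exists_isTransOn m)).2

theorem stage_mono : Monotone a.stage := fun _ m' hm =>
  Nat.find_min' _ ⟨hm.trans (a.le_stage m'), fun x hx y hy z hz =>
    a.isTransOn_stage m' x (hx.trans hm) y (hy.trans hm) z (hz.trans hm)⟩

theorem exists_rel_stage (m v : ℕ) : ∃ u, a.rel (a.stage m) v u := ⟨v, a.rel_refl _ v⟩

noncomputable def rep (m v : ℕ) : ℕ := Nat.find (a.exists_rel_stage m v)

theorem rel_rep (m v : ℕ) : a.rel (a.stage m) v (a.rep m v) := Nat.find_spec _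

theorem rep_le_of_rel {m v u : ℕ} (h : a.rel (a.stage m) v u) : a.rep m v ≤ u :=
  Nat.find_min' _ h

theorem rep_le (m v : ℕ) : a.rep m v ≤ v := a.rep_le_of_rel (a.rel_refl _ v)

theorem rep_eq_of_rel {m v u : ℕ} (hv : v ≤ m) (hu : u ≤ m) (h : a.rel (a.stage m) v u) :
    a.rep m v = a.rep m u := by
  have htrans := a.isTransOn_stage m
  apply le_antisymm <;> apply a.rep_le_of_rel
  · exact htrans v hv u hu _ ((a.rep_le m u).trans hu) h (a.rel_rep m u)
  · exact htrans u hu v hv _ ((a.rep_le m v).trans hv) (a.rel_symm h) (a.rel_rep m v)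

theorem rep_rep {m b v : ℕ} (hvm : v ≤ m) (hmb : m ≤ b) : a.rep m (a.rep b v) = a.rep m v :=
  (a.rep_eq_of_rel hvm ((a.rep_le b v).trans hvm)
    (a.rel_anti (a.stage_mono hmb) (a.rel_rep b v))).symm

noncomputable def col (v n : ℕ) : ℕ :=
  if v ≤ n then a.rep n v else if a.rep v v < v then col (a.rep v v) n else v
termination_by v

theorem col_of_le {v n : ℕ} (h : v ≤ n) : a.col v n = a.rep n v := by
  rw [col, if_pos h]

theorem col_of_lt {v n : ℕ} (hn : n < v) (hv : a.rep v v < v) :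
    a.col v n = a.col (a.rep v v) n := by
  rw [col, if_neg hn.not_ge, if_pos hv]

theorem col_rep {v b n : ℕ} (hvb : v ≤ b) (hnb : n < b) : a.col (a.rep b v) n = a.col v n := by
  induction v using Nat.strong_induction_on generalizing b with
  | _ v ih =>
  rcases (a.rep_le b v).eq_or_lt with hu | hu
  · rw [hu]
  rcases le_or_gt v n with hvn | hnv
  · rw [a.col_of_le hvn, a.col_of_le (hu.le.trans hvn), a.rep_rep hvn hnb.le]
  · have hrep : a.rep v (a.rep b v) = a.rep v v := a.rep_rep le_rfl hvb
    rw [a.col_of_lt hnv (hrep ▸ (a.rep_le v _).trans_lt hu), ← hrep, ih _ hu hu.le hnv]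

theorem col_eq_col_of_lt {x y : ℕ} (hxy : x < y) (h : E x y) (n : ℕ) :
    a.col x n = a.col y n := by
  have hrel := a.iff_forall_rel.1 h
  rcases le_or_gt y n with hyn | hny
  · rw [a.col_of_le (hxy.le.trans hyn), a.col_of_le hyn,
      a.rep_eq_of_rel (hxy.le.trans hyn) hyn (hrel _)]
  · have hrep : a.rep y x = a.rep y y := a.rep_eq_of_rel hxy.le le_rfl (hrel _)
    rw [a.col_of_lt hny (hrep ▸ (a.rep_le y x).trans_lt hxy), ← hrep, a.col_rep hxy.le hny]

theorem exists_col_ne {x y : ℕ} (h : ¬E x y) : ∃ n, a.col x n ≠ a.col y n := by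
  obtain ⟨s, hs⟩ := not_forall.1 (mt a.iff_forall_rel.2 h)
  set n := max (max x y) s
  have hx : x ≤ n := (le_max_left _ _).trans (le_max_left _ _)
  have hy : y ≤ n := (le_max_right _ _).trans (le_max_left _ _)
  refine ⟨n, fun hcol => hs (a.rel_anti ((le_max_right _ _).trans (a.le_stage n)) ?_)⟩
  rw [a.col_of_le hx, a.col_of_le hy] at hcol
  exact a.isTransOn_stage n x hx _ ((a.rep_le n x).trans hx) y hy (a.rel_rep n x)
    (hcol ▸ a.rel_symm (a.rel_rep n y))

theorem iff_col {x y : ℕ} : E x y ↔ ∀ n, a.col x n = a.col y n := by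
  refine ⟨fun h n => ?_, fun h => by_contra fun hne => ?_⟩
  · rcases lt_trichotomy x y with hxy | rfl | hxy
    · exact a.col_eq_col_of_lt hxy h n
    · rfl
    · exact (a.col_eq_col_of_lt hxy (a.equivalence.symm h) n).symm
  · obtain ⟨n, hn⟩ := a.exists_col_ne hne
    exact hn (h n)

theorem computablePred_rel_comp {α : Type*} [Primcodable α] {s x y : α → ℕ}
    (hs : Computable s) (hx : Computable x) (hy : Computable y) :
    ComputablePred fun c => a.rel (s c) (x c) (y c) :=
  a.computablePred_rel.comp (hs.pair (hx.pair hy))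

theorem computablePred_isTransOn : ComputablePred fun p : ℕ × ℕ => a.IsTransOn p.1 p.2 := by
  have hs : Computable fun w : (((ℕ × ℕ) × ℕ) × ℕ) × ℕ => w.1.1.1.2 :=
    snd.comp (fst.comp (fst.comp fst))
  have hx : Computable fun w : (((ℕ × ℕ) × ℕ) × ℕ) × ℕ => w.1.1.2 := snd.comp (fst.comp fst)
  have hy : Computable fun w : (((ℕ × ℕ) × ℕ) × ℕ) × ℕ => w.1.2 := snd.comp fst
  exact .forall_le (.forall_le (.forall_le ((a.computablePred_rel_comp hs hx hy).imp
    ((a.computablePred_rel_comp hs hy snd).imp (a.computablePred_rel_comp hs hx snd)))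
    (fst.comp (fst.comp fst))) (fst.comp fst)) fst

theorem computable_stage : Computable a.stage :=
  Computable.find (P := fun m s => m ≤ s ∧ a.IsTransOn m s)
    (Primrec.nat_le.computablePred.and a.computablePred_isTransOn) a.exists_isTransOn

theorem computable₂_rep : Computable₂ a.rep :=
  Computable.find (P := fun (p : ℕ × ℕ) u => a.rel (a.stage p.1) p.2 u)
    (a.computablePred_rel_comp (a.computable_stage.comp (fst.comp fst)) (snd.comp fst) snd)
    fun p => a.exists_rel_stage p.1 p.2

theorem computable₂_col : Computable₂ a.col := by
  have hlen : Computable fun p : ℕ × List ℕ => p.2.length := list_length.comp snd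
  have hg : Computable₂ fun (n : ℕ) (L : List ℕ) => some (if L.length ≤ n then
      a.rep n L.length else L[a.rep L.length L.length]?.getD L.length) :=
    option_some.comp <| (cond (Primrec.nat_le.decide.to_comp.comp hlen fst)
      (a.computable₂_rep.comp fst hlen)
      (option_getD (list_getElem?.comp snd (a.computable₂_rep.comp hlen hlen)) hlen)).of_eq
      fun p => by simp only [Bool.cond_decide]
  refine (nat_strong_rec (fun n v => a.col v n) hg fun n v => ?_).comp snd fst
  simp only [List.length_map, List.length_range]
  rw [col]
  split_ifs <;> simp [*]

end Pi01Approx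

/-- Every Π⁰₁ equivalence relation is the relation of equality of the columns
of a computable binary function. -/
theorem stmt_3 (E : ℕ → ℕ → Prop) (hE : Pi01Rel E) (hEquiv : Equivalence E) :
    ∃ f : ℕ → ℕ → ℕ, Computable₂ f ∧ ∀ x y, E x y ↔ ∀ n, f x n = f y n := by
  obtain ⟨a⟩ := hE.nonempty_pi01Approx hEquiv
  exact ⟨a.col, a.computable₂_col, fun _ _ => a.iff_col⟩
end

section
/- Let S ⊆ ℕ be recursively enumerable and not computable. Then the equivalence relation E on ℕ with the two classes S and ℕ \ S, i.e. E x y ↔ (x ∈ S ↔ y ∈ S), is not effectively Π⁰₂. -/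
/-- The `e`-th computably enumerable set: the domain of the `e`-th partial
computable function under the standard numbering. -/
def W (e : ℕ) : Set ℕ :=
  {n | ((Denumerable.ofNat Nat.Partrec.Code e).eval n).Dom}

/-- An equivalence relation on ℕ is effectively Π⁰₂. -/
def EffectivelyPi02 (E : ℕ → ℕ → Prop) : Prop :=
  ∃ h : ℕ → ℕ, Computable h ∧
    (∀ n, Equivalence (fun x y => Nat.pair x y ∈ W (h n))) ∧
    ∀ x y, E x y ↔ ∀ n, Nat.pair x y ∈ W (h n)

/-!
Since `S` is not computable, it has an element `a` and a non-element `b`, and some `F_n` fails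
to relate `a` and `b`. Every `F_n` is an equivalence relation containing `E`, whose only two
classes are `S` and its complement; so `F_n` has exactly these classes, namely those of `a` and
of `b`. Hence `S = {x | F_n x a}` and `ℕ \ S = {x | F_n x b}` are both c.e., and `S` is
computable by Post's theorem.
-/

theorem ComputablePred.const {α : Type*} [Primcodable α] (P : Prop) :
    ComputablePred fun _ : α => P :=
  ⟨fun _ => Classical.dec P, Computable.const _⟩

theorem ComputablePred.exists_and_exists_not {α : Type*} [Primcodable α] {p : α → Prop}
    (hp : ¬ ComputablePred p) : (∃ a, p a) ∧ ∃ b, ¬ p b := by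
  refine ⟨by_contra fun h => hp ?_, by_contra fun h => hp ?_⟩
  · exact (ComputablePred.const False).of_eq fun x => by simpa using not_exists.1 h x
  · exact (ComputablePred.const True).of_eq fun x => by simpa using not_exists_not.1 h x

theorem Equivalence.mem_iff_rel_of_not_rel {α : Type*} {F : α → α → Prop} (hF : Equivalence F)
    {S : Set α} (hS : ∀ x y, (x ∈ S ↔ y ∈ S) → F x y) {a b : α} (ha : a ∈ S) (hb : b ∉ S)
    (hab : ¬ F a b) (x : α) : x ∈ S ↔ F x a := by
  refine ⟨fun hx => hS x a (iff_of_true hx ha), fun hxa => by_contra fun hx => hab ?_⟩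
  exact hF.trans (hF.symm hxa) (hS x b (iff_of_false hx hb))

theorem rePred_pair_mem_W (e b : ℕ) : REPred fun x => Nat.pair x b ∈ W e :=
  (Nat.Partrec.Code.eval_part.comp (Computable.const _)
    (Primrec₂.natPair.comp .id (Primrec.const b)).to_comp).dom_re

theorem stmt_9_general (S : Set ℕ)
    (hnc : ¬ ComputablePred (fun n => n ∈ S)) :
    ¬ EffectivelyPi02 (fun x y => (x ∈ S ↔ y ∈ S)) := by
  rintro ⟨h, -, hequiv, hE⟩
  obtain ⟨⟨a, ha⟩, ⟨b, hb⟩⟩ := ComputablePred.exists_and_exists_not hnc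
  obtain ⟨n, hn⟩ : ∃ n, Nat.pair a b ∉ W (h n) := by
    simpa using mt (hE a b).2 fun hab => hb (hab.1 ha)
  have hS : ∀ x y, (x ∈ S ↔ y ∈ S) → Nat.pair x y ∈ W (h n) := fun x y hxy => (hE x y).1 hxy n
  have hSc : ∀ x y, (x ∈ Sᶜ ↔ y ∈ Sᶜ) → Nat.pair x y ∈ W (h n) := fun x y hxy =>
    hS x y (not_iff_not.1 hxy)
  have hba : Nat.pair b a ∉ W (h n) := fun hba => hn ((hequiv n).symm hba)
  exact hnc (ComputablePred.computable_iff_re_compl_re'.2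
    ⟨(rePred_pair_mem_W (h n) a).of_eq fun x =>
      ((hequiv n).mem_iff_rel_of_not_rel hS ha hb hn x).symm,
     (rePred_pair_mem_W (h n) b).of_eq fun x =>
      ((hequiv n).mem_iff_rel_of_not_rel hSc hb (not_not.2 ha) hba x).symm⟩)

/-- If `S` is r.e. and not computable, the equivalence relation with classes
`S` and `ℕ \ S` is not effectively Π⁰₂. -/
theorem stmt_9 (S : Set ℕ) (hre : REPred (fun n => n ∈ S))
    (hnc : ¬ ComputablePred (fun n => n ∈ S)) :
    ¬ EffectivelyPi02 (fun x y => (x ∈ S ↔ y ∈ S)) :=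
  stmt_9_general S hnc
end

section
/- Let (⪯, ⊓, ⊔, ᶜ, 0, 1) be an r.e.-presented Boolean algebra on ℕ with induced equivalence ≈. Suppose U, V ⊆ ℕ are disjoint r.e. sets that are effectively inseparable, and there is a total computable g : ℕ → ℕ such that x ∈ U → g x ≈ 0 and x ∈ V → g x ≈ 1. Then the Boolean algebra is effectively inseparable, i.e. the disjoint r.e. sets {x : x ≈ 0} and {x : x ≈ 1} are effectively inseparable. -/
/-- Disjoint sets `A`, `B` are effectively inseparable: there is a computable
binary productive function. -/
def EffectivelyInseparable (A B : Set ℕ) : Prop :=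
  ∃ g : ℕ → ℕ → ℕ, Computable₂ g ∧
    ∀ p q, A ⊆ W p → B ⊆ W q → W p ∩ W q = ∅ → g p q ∉ W p ∪ W q

/-- An r.e.-presented (nontrivial) Boolean algebra on ℕ. -/
structure REBooleanAlgebra where
  le : ℕ → ℕ → Prop
  inf : ℕ → ℕ → ℕ
  sup : ℕ → ℕ → ℕ
  compl : ℕ → ℕ
  bot : ℕ
  top : ℕ
  le_re : REPred (fun p : ℕ × ℕ => le p.1 p.2)
  le_refl : ∀ x, le x x
  le_trans : ∀ x y z, le x y → le y z → le x z
  inf_computable : Computable₂ inf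
  sup_computable : Computable₂ sup
  compl_computable : Computable compl
  inf_le_left : ∀ x y, le (inf x y) x
  inf_le_right : ∀ x y, le (inf x y) y
  le_inf : ∀ x y z, le z x → le z y → le z (inf x y)
  le_sup_left : ∀ x y, le x (sup x y)
  le_sup_right : ∀ x y, le y (sup x y)
  sup_le : ∀ x y z, le x z → le y z → le (sup x y) z
  bot_le : ∀ x, le bot x
  le_top : ∀ x, le x top
  distrib : ∀ x y z, le (inf x (sup y z)) (sup (inf x y) (inf x z)) ∧
    le (sup (inf x y) (inf x z)) (inf x (sup y z))
  inf_compl : ∀ x, le (inf x (compl x)) bot ∧ le bot (inf x (compl x))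
  sup_compl : ∀ x, le (sup x (compl x)) top ∧ le top (sup x (compl x))
  nontrivial : ¬ (le bot top ∧ le top bot)

/-- The induced equivalence of an r.e.-presented Boolean algebra. -/
def REBooleanAlgebra.equiv (B : REBooleanAlgebra) (x y : ℕ) : Prop :=
  B.le x y ∧ B.le y x


/-!
Effective inseparability is inherited along computable many-one reductions: pulling
`W p`, `W q` back along `g` gives (by s-m-n) indices `k p`, `k q` of disjoint c.e. sets
separating `U` from `V`, and `g` applied to their productive value is productive for
`W p`, `W q`. The classes of `0` and `1` are disjoint because the algebra is nontrivial.
-/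

open Nat.Partrec (Code)

theorem exists_computable_W_preimage {g : ℕ → ℕ} (hg : Computable g) :
    ∃ k : ℕ → ℕ, Computable k ∧ ∀ e, W (k e) = g ⁻¹' W e := by
  have hF : Nat.Partrec (fun n : ℕ =>
      (Denumerable.ofNat Code n.unpair.1).eval (g n.unpair.2)) :=
    Partrec.nat_iff.mp <| Code.eval_part.comp
      ((Computable.ofNat Code).comp (Computable.fst.comp Computable.unpair))
      (hg.comp (Computable.snd.comp Computable.unpair))
  obtain ⟨c₀, hc₀⟩ := Code.exists_code.mp hF
  obtain ⟨f, hf, hfe⟩ := Code.smn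
  refine ⟨fun e => Encodable.encode (f c₀ e),
    Computable.encode.comp (hf.comp (Computable.const c₀) Computable.id), fun e => ?_⟩
  ext x
  have heval : (Denumerable.ofNat Code (Encodable.encode (f c₀ e))).eval x
      = (Denumerable.ofNat Code e).eval (g x) := by
    rw [Denumerable.ofNat_encode, hfe, hc₀]
    simp
  simp only [W, Set.mem_ofPred_eq, Set.mem_preimage, heval]

theorem EffectivelyInseparable.of_computable_mapsTo {U V A B : Set ℕ}
    (hUV : EffectivelyInseparable U V) {g : ℕ → ℕ} (hg : Computable g)
    (hgU : Set.MapsTo g U A) (hgV : Set.MapsTo g V B) :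
    EffectivelyInseparable A B := by
  obtain ⟨h, hh, hprod⟩ := hUV
  obtain ⟨k, hk, hkW⟩ := exists_computable_W_preimage hg
  refine ⟨fun p q => g (h (k p) (k q)),
    hg.comp (hh.comp (hk.comp Computable.fst) (hk.comp Computable.snd)), ?_⟩
  intro p q hAp hBq hpq
  have hUp : U ⊆ W (k p) := by rw [hkW]; exact hgU.mono_right hAp
  have hVq : V ⊆ W (k q) := by rw [hkW]; exact hgV.mono_right hBq
  have hdisj : W (k p) ∩ W (k q) = ∅ := by
    rw [hkW, hkW, ← Set.preimage_inter, hpq, Set.preimage_empty]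
  have hout := hprod (k p) (k q) hUp hVq hdisj
  rwa [hkW, hkW, ← Set.preimage_union, Set.mem_preimage] at hout

theorem REBooleanAlgebra.equiv_bot_inter_equiv_top (B : REBooleanAlgebra) :
    {x | B.equiv x B.bot} ∩ {x | B.equiv x B.top} = ∅ := by
  refine Set.eq_empty_iff_forall_notMem.mpr ?_
  rintro x ⟨⟨hxb, hbx⟩, ⟨hxt, htx⟩⟩
  exact B.nontrivial ⟨B.le_trans _ _ _ hbx hxt, B.le_trans _ _ _ htx hxb⟩

theorem stmt_11_general (B : REBooleanAlgebra) (U V : Set ℕ)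
    (hei : EffectivelyInseparable U V)
    (g : ℕ → ℕ) (hg : Computable g)
    (hg0 : ∀ x, x ∈ U → B.equiv (g x) B.bot)
    (hg1 : ∀ x, x ∈ V → B.equiv (g x) B.top) :
    {x | B.equiv x B.bot} ∩ {x | B.equiv x B.top} = ∅ ∧
      EffectivelyInseparable {x | B.equiv x B.bot} {x | B.equiv x B.top} :=
  ⟨B.equiv_bot_inter_equiv_top, hei.of_computable_mapsTo hg hg0 hg1⟩

/-- Criterion for effective inseparability of an r.e.-presented Boolean
algebra. -/
theorem stmt_11 (B : REBooleanAlgebra) (U V : Set ℕ)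
    (hUV : U ∩ V = ∅) (hU : REPred (fun n => n ∈ U)) (hV : REPred (fun n => n ∈ V))
    (hei : EffectivelyInseparable U V)
    (g : ℕ → ℕ) (hg : Computable g)
    (hg0 : ∀ x, x ∈ U → B.equiv (g x) B.bot)
    (hg1 : ∀ x, x ∈ V → B.equiv (g x) B.top) :
    {x | B.equiv x B.bot} ∩ {x | B.equiv x B.top} = ∅ ∧
      EffectivelyInseparable {x | B.equiv x B.bot} {x | B.equiv x B.top} :=
  stmt_11_general B U V hei g hg hg0 hg1
end

section
/- The relation E₁^{ce} on ℕ defined by E₁^{ce} i j ↔ the set {n : (W_i)_n ≠ (W_j)_n} is finite (i.e. for all but finitely many n the n-th columns of W_i and W_j agree) is a Σ⁰₃-complete equivalence relation: it is an equivalence relation, it is Σ⁰₃, and every Σ⁰₃ equivalence relation F on ℕ admits a total computable f : ℕ → ℕ with F i j ↔ E₁^{ce} (f i) (f j) for all i, j. -/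
/-- A binary relation on ℕ is Σ⁰₃. -/
def Sigma03Rel (P : ℕ → ℕ → Prop) : Prop :=
  ∃ M : ℕ → ℕ → ℕ → ℕ → ℕ → Bool,
    Computable (fun p : ℕ × ℕ × ℕ × ℕ × ℕ => M p.1 p.2.1 p.2.2.1 p.2.2.2.1 p.2.2.2.2) ∧
    ∀ x y, P x y ↔ ∃ a, ∀ b, ∃ c, M x y a b c = true

/-- The `n`-th column of a set of naturals. -/
def column (A : Set ℕ) (n : ℕ) : Set ℕ := {x | Nat.pair n x ∈ A}

/-- Almost all columns of `W i` and `W j` agree. -/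
def E1ce (i j : ℕ) : Prop := {n | column (W i) n ≠ column (W j) n}.Finite

open Filter Nat.Partrec Code Encodable

/-!
Membership of `⟨n, x⟩` in `W e` is `Σ⁰₁` in `(e, n, x)`, so "almost all columns agree" is
`∃ a ∀ n ≥ a ∀ x`, a `Σ⁰₃` condition.

For completeness write `F x y ↔ ∃ a, ∀ b, ∃ c, R (x, y, a) b c` with `R` primitive recursive.
Then `∀ b, ∃ c, R k b c` holds iff the length of the prefix of `b`s verified by stage `t` grows
at infinitely many (expansionary) stages `t`. For each `n` consider the graph on vertices `< n`
which, at stage `t`, joins `u` and `v` when `t` is expansionary for some `a < n` with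
`(u, v, a)` or `(v, u, a)`. The `n`-th column of `W (f i)` consists of the pairs `⟨z, s⟩` such
that `i` can be reached from `z` along edges of increasing stages `> s`.
If `F i j`, then for all large `n` the edge `i — j` recurs at infinitely many stages, so the
`n`-th columns of `f i` and `f j` agree. If `¬ F i j`, then in graph `n` only finitely many
stages carry an edge between `F`-inequivalent vertices; past them every vertex reachable from
`i` is `F`-equivalent to `i`, so the pair `⟨i, S⟩` lies in the `n`-th column of `f i` but not
in that of `f j`, for every `n`.
-/

theorem E1ce_iff_eventually {i j : ℕ} :
    E1ce i j ↔ ∀ᶠ n in atTop, column (W i) n = column (W j) n := by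
  rw [E1ce, ← eventually_cofinite, Nat.cofinite_eq_atTop]

theorem equivalence_E1ce : Equivalence E1ce where
  refl _ := E1ce_iff_eventually.2 (Eventually.of_forall fun _ => rfl)
  symm h := E1ce_iff_eventually.2 ((E1ce_iff_eventually.1 h).mono fun _ => Eq.symm)
  trans h₁ h₂ := E1ce_iff_eventually.2 (((E1ce_iff_eventually.1 h₁).and
    (E1ce_iff_eventually.1 h₂)).mono fun _ h => h.1.trans h.2)

theorem exists_iff_exists_iff_forall_exists {A B : ℕ → Prop} (hA : Monotone A)
    (hB : Monotone B) : ((∃ k, A k) ↔ ∃ k, B k) ↔ ∀ k, ∃ c, (A k → B c) ∧ (B k → A c) := by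
  constructor
  · intro h k
    have h₁ : ∃ c, A k → B c := (em (A k)).elim
      (fun hk => (h.1 ⟨k, hk⟩).imp fun _ hc _ => hc) fun hk => ⟨0, fun h => absurd h hk⟩
    have h₂ : ∃ c, B k → A c := (em (B k)).elim
      (fun hk => (h.2 ⟨k, hk⟩).imp fun _ hc _ => hc) fun hk => ⟨0, fun h => absurd h hk⟩
    obtain ⟨c₁, hc₁⟩ := h₁
    obtain ⟨c₂, hc₂⟩ := h₂
    exact ⟨max c₁ c₂, fun hk => hB (le_max_left _ _) (hc₁ hk),
      fun hk => hA (le_max_right _ _) (hc₂ hk)⟩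
  · intro h
    exact ⟨fun ⟨k, hk⟩ => (h k).imp fun _ hc => hc.1 hk,
      fun ⟨k, hk⟩ => (h k).imp fun _ hc => hc.2 hk⟩

def haltsIn (e k p : ℕ) : Bool :=
  (evaln k (Denumerable.ofNat Code e) p).isSome

theorem mem_W_iff_exists_haltsIn {e p : ℕ} : p ∈ W e ↔ ∃ k, haltsIn e k p = true := by
  simp only [W, Set.mem_ofPred_eq, haltsIn, Part.dom_iff_mem, evaln_complete,
    Option.isSome_iff_exists]
  exact exists_comm

theorem monotone_haltsIn (e p : ℕ) : Monotone fun k => haltsIn e k p = true := fun _ _ h hk => by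
  obtain ⟨v, hv⟩ := Option.isSome_iff_exists.1 hk
  exact Option.isSome_iff_exists.2 ⟨v, evaln_mono h hv⟩

open Primrec in
theorem primrec_haltsIn : Primrec fun q : ℕ × ℕ × ℕ => haltsIn q.1 q.2.1 q.2.2 :=
  option_isSome.comp (primrec_evaln.comp
    (((fst.comp snd).pair ((Primrec.ofNat Code).comp fst)).pair (snd.comp snd)))

def haltAgree (x y p k c : ℕ) : Bool :=
  (!haltsIn x k p || haltsIn y c p) && (!haltsIn y k p || haltsIn x c p)

theorem mem_W_iff_mem_W_iff {x y p : ℕ} :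
    (p ∈ W x ↔ p ∈ W y) ↔ ∀ k, ∃ c, haltAgree x y p k c = true := by
  simp only [mem_W_iff_exists_haltsIn, exists_iff_exists_iff_forall_exists (monotone_haltsIn x p)
    (monotone_haltsIn y p), haltAgree]
  simp [imp_iff_not_or]

theorem E1ce_iff_exists_forall {x y : ℕ} :
    E1ce x y ↔ ∃ a, ∀ p, a ≤ p.unpair.1 → (p ∈ W x ↔ p ∈ W y) := by
  rw [E1ce_iff_eventually, eventually_atTop]
  refine exists_congr fun a =>
    ⟨fun h p hp => ?_, fun h n hn => Set.ext fun m => h _ (by simpa using hn)⟩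
  simpa [column] using Set.ext_iff.1 (h _ hp) p.unpair.2

open Primrec in
theorem sigma03Rel_E1ce : Sigma03Rel E1ce := by
  -- `b = ⟨p, k⟩` with `p = ⟨n, m⟩`; columns `n < a` are exempt.
  refine ⟨fun x y a b c =>
    decide (b.unpair.1.unpair.1 < a) || haltAgree x y b.unpair.1 b.unpair.2 c, ?_, fun x y => ?_⟩
  · have hb : Primrec fun p : ℕ × ℕ × ℕ × ℕ × ℕ => p.2.2.2.1.unpair :=
      unpair.comp (fst.comp (snd.comp (snd.comp snd)))
    have hc : Primrec fun p : ℕ × ℕ × ℕ × ℕ × ℕ => p.2.2.2.2 := snd.comp (snd.comp (snd.comp snd))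
    have halts {e k : ℕ × ℕ × ℕ × ℕ × ℕ → ℕ} (he : Primrec e) (hk : Primrec k) :
        Primrec fun p => haltsIn (e p) (k p) p.2.2.2.1.unpair.1 :=
      primrec_haltsIn.comp (he.pair (hk.pair (fst.comp hb)))
    refine Primrec.to_comp (Primrec.or.comp
      (nat_lt.comp (fst.comp (unpair.comp (fst.comp hb))) (fst.comp (snd.comp snd))).decide
      (Primrec.and.comp
        (Primrec.or.comp (Primrec.not.comp (halts fst (snd.comp hb))) (halts (fst.comp snd) hc))
        (Primrec.or.comp (Primrec.not.comp (halts (fst.comp snd) (snd.comp hb))) (halts fst hc))))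
  · rw [E1ce_iff_exists_forall]
    refine exists_congr fun a => ⟨fun h b => ?_, fun h p hp => mem_W_iff_mem_W_iff.2 fun k => ?_⟩
    · by_cases hb : b.unpair.1.unpair.1 < a
      · exact ⟨0, by simp [hb]⟩
      · obtain ⟨c, hc⟩ := mem_W_iff_mem_W_iff.1 (h _ (not_lt.1 hb)) b.unpair.2
        exact ⟨c, by simp [hc]⟩
    · obtain ⟨c, hc⟩ := h (Nat.pair p k)
      exact ⟨c, by simpa [not_lt.2 hp] using hc⟩

theorem Computable.exists_primrec_iff_exists {α : Type*} [Primcodable α] {f : α → Bool}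
    (hf : Computable f) :
    ∃ q : α → ℕ → Bool, Primrec₂ q ∧ ∀ a, f a = true ↔ ∃ k, q a k = true := by
  have hg : Computable fun n => encode ((decode (α := α) n).map f) :=
    Computable.encode.comp (Computable.option_map Computable.decode (hf.comp Computable.snd).to₂)
  obtain ⟨c, hc⟩ := exists_code.1 (Partrec.nat_iff.1 hg.partrec)
  refine ⟨fun a k => decide (evaln k c (encode a) = some (encode (some true))), ?_, fun a => ?_⟩
  · exact (Primrec.eq.comp (primrec_evaln.comp ((Primrec.snd.pair (Primrec.const c)).pair
      (Primrec.encode.comp Primrec.fst))) (Primrec.const _)).decide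
  · have : encode (some true) ∈ eval c (encode a) ↔ f a = true := by
      cases hfa : f a <;> simp [hc, encodek, hfa]
    simp only [← this, evaln_complete, Option.mem_def, decide_eq_true_eq]

open Primrec in
theorem Sigma03Rel.exists_primrec {F : ℕ → ℕ → Prop} (hF : Sigma03Rel F) :
    ∃ R : ℕ × ℕ × ℕ → ℕ → ℕ → Bool, Primrec (fun p : (ℕ × ℕ × ℕ) × ℕ × ℕ => R p.1 p.2.1 p.2.2) ∧
      ∀ x y, F x y ↔ ∃ a, ∀ b, ∃ c, R (x, y, a) b c = true := by
  obtain ⟨M, hM, hFM⟩ := hF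
  obtain ⟨q, hq, hMq⟩ := hM.exists_primrec_iff_exists
  -- the new `c` codes the old witness `c` together with a step bound `k`
  refine ⟨fun k b c => q (k.1, k.2.1, k.2.2, b, c.unpair.1) c.unpair.2, ?_, fun x y => ?_⟩
  · have hc := Primrec.unpair.comp (Primrec.snd.comp (Primrec.snd (α := ℕ × ℕ × ℕ) (β := ℕ × ℕ)))
    exact hq.comp ((fst.comp fst).pair ((fst.comp (snd.comp fst)).pair
      ((snd.comp (snd.comp fst)).pair ((fst.comp snd).pair (fst.comp hc))))) (snd.comp hc)
  · rw [hFM]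
    refine exists_congr fun a => forall_congr' fun b => ⟨?_, ?_⟩
    · rintro ⟨c, hc⟩
      obtain ⟨k, hk⟩ := (hMq (x, y, a, b, c)).1 hc
      exact ⟨Nat.pair c k, by simpa using hk⟩
    · rintro ⟨c, hc⟩
      exact ⟨c.unpair.1, (hMq (x, y, a, b, c.unpair.1)).2 ⟨_, hc⟩⟩

theorem Monotone.frequently_lt_succ_iff {g : ℕ → ℕ} (hg : Monotone g) :
    (∃ᶠ t in atTop, g t < g (t + 1)) ↔ ∀ N, ∃ t, N ≤ g t := by
  constructor
  · intro h N
    induction N with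
    | zero => exact ⟨0, Nat.zero_le _⟩
    | succ N ih =>
      obtain ⟨t, ht⟩ := ih
      obtain ⟨t', htt', hlt⟩ := frequently_atTop.1 h t
      exact ⟨t' + 1, by have := hg htt'; omega⟩
  · intro h
    rw [frequently_atTop]
    intro T
    by_contra! hstuck
    have hconst : ∀ t, T ≤ t → g t ≤ g T := by
      intro t ht
      induction t, ht using Nat.le_induction with
      | base => exact le_rfl
      | succ t ht ih => exact (hstuck t ht).trans ih
    obtain ⟨t, ht⟩ := h (g T + 1)
    have := hg (le_max_left t T)
    have := hconst _ (le_max_right t T)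
    omega

section Pi2

variable {α : Type*} (R : α → ℕ → ℕ → Bool)

def prefixLen (k : α) (t : ℕ) : ℕ :=
  Nat.findGreatest (fun b => ∀ b' < b, ∃ c < t, R k b' c) t

def Expansionary (k : α) (t : ℕ) : Prop :=
  prefixLen R k t < prefixLen R k (t + 1)

instance (k : α) (t : ℕ) : Decidable (Expansionary R k t) :=
  inferInstanceAs (Decidable (_ < _))

variable {R}

theorem prefixLen_mono (k : α) : Monotone (prefixLen R k) := fun _ _ htt' =>
  Nat.findGreatest_mono (fun _ hb b' hb' => (hb b' hb').imp fun _ hc => ⟨by omega, hc.2⟩) htt'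

theorem forall_exists_iff_unbounded_prefixLen (k : α) :
    (∀ b, ∃ c, R k b c) ↔ ∀ N, ∃ t, N ≤ prefixLen R k t := by
  constructor
  · intro h N
    have hwit : ∀ᶠ t in atTop, N ≤ t ∧ ∀ b' ∈ Set.Iio N, ∃ c < t, R k b' c := by
      refine (eventually_ge_atTop N).and ((Set.finite_Iio N).eventually_all.2 fun b' _ => ?_)
      obtain ⟨c, hc⟩ := h b'
      exact (eventually_gt_atTop c).mono fun t ht => ⟨c, ht, hc⟩
    obtain ⟨t, hNt, ht⟩ := hwit.exists
    exact ⟨t, Nat.le_findGreatest hNt ht⟩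
  · intro h b
    by_contra! hb
    obtain ⟨t, ht⟩ := h (b + 1)
    have hspec := Nat.findGreatest_spec (P := fun b => ∀ b' < b, ∃ c < t, R k b' c)
      (Nat.zero_le t) (by simp)
    obtain ⟨c, -, hc⟩ := hspec b (by unfold prefixLen at ht; omega)
    exact hb c hc

theorem frequently_expansionary_iff (k : α) :
    (∃ᶠ t in atTop, Expansionary R k t) ↔ ∀ b, ∃ c, R k b c :=
  ((prefixLen_mono k).frequently_lt_succ_iff).trans (forall_exists_iff_unbounded_prefixLen k).symm

open Primrec in
theorem primrecRel_expansionary [Primcodable α]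
    (hR : Primrec fun p : α × ℕ × ℕ => R p.1 p.2.1 p.2.2) : PrimrecRel (Expansionary R) := by
  have hQ : PrimrecRel fun (c : ℕ) (q : ℕ × α × ℕ) => R q.2.1 q.1 c = true :=
    Primrec.eq.comp (hR.comp ((fst.comp (snd.comp snd)).pair ((fst.comp snd).pair fst)))
      (const true)
  have hS : PrimrecRel fun (b' : ℕ) (p : α × ℕ) => ∃ c < p.2, R p.1 b' c :=
    (hQ.exists_mem_list.comp (list_range.comp (snd.comp snd)) Primrec.id).of_eq
      fun _ => by simp
  have hP : PrimrecRel fun (p : α × ℕ) (b : ℕ) => ∀ b' < b, ∃ c < p.2, R p.1 b' c :=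
    (hS.forall_mem_list.comp (list_range.comp snd) fst).of_eq fun _ => by simp
  have hlen : Primrec₂ (prefixLen R) := Primrec.nat_findGreatest snd hP
  exact Primrec.nat_lt.comp hlen (hlen.comp fst (succ.comp snd))

end Pi2

section Reach

variable (E : ℕ → ℕ → ℕ → Prop) [∀ t, DecidableRel (E t)] (n s z : ℕ)

def reachList : ℕ → List ℕ
  | 0 => [z]
  | t + 1 => reachList t ++ (List.range n).filter fun v => s ≤ t ∧ ∃ u ∈ reachList t, E (t + 1) u v

variable {E n s z}

theorem mem_reachList_succ {t v : ℕ} :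
    v ∈ reachList E n s z (t + 1) ↔
      v ∈ reachList E n s z t ∨ v < n ∧ s ≤ t ∧ ∃ u ∈ reachList E n s z t, E (t + 1) u v := by
  simp [reachList]

theorem reachList_subset {t t' : ℕ} (h : t ≤ t') : reachList E n s z t ⊆ reachList E n s z t' := by
  induction t', h using Nat.le_induction with
  | base => exact List.Subset.refl _
  | succ t' _ ih => exact fun v hv => mem_reachList_succ.2 (Or.inl (ih hv))

theorem start_mem_reachList (t : ℕ) : z ∈ reachList E n s z t :=
  reachList_subset (Nat.zero_le t) (List.mem_singleton_self z)

theorem mem_reachList_induction (Q : ℕ → Prop) (hz : Q z)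
    (hstep : ∀ t, s < t → ∀ u v, E t u v → Q u → Q v) {t v : ℕ}
    (hv : v ∈ reachList E n s z t) : Q v := by
  induction t generalizing v with
  | zero => simp_all [reachList]
  | succ t ih =>
    obtain hv | ⟨-, hst, u, hu, huv⟩ := mem_reachList_succ.1 hv
    · exact ih hv
    · exact hstep (t + 1) (by omega) u v huv (ih hu)

theorem exists_mem_reachList_of_frequently {i j t₀ : ℕ} (hij : ∃ᶠ t in atTop, E t i j) (hj : j < n)
    (hi : i ∈ reachList E n s z t₀) : ∃ t, j ∈ reachList E n s z t := by
  obtain ⟨t, ht, hE⟩ := frequently_atTop.1 hij (max t₀ s + 1)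
  obtain ⟨t, rfl⟩ : ∃ t', t = t' + 1 := ⟨t - 1, by omega⟩
  exact ⟨t + 1, mem_reachList_succ.2 (Or.inr ⟨hj, by omega, i, reachList_subset (by omega) hi, hE⟩)⟩

end Reach

def reachCol (E : ℕ → ℕ → ℕ → ℕ → Prop) [∀ n t, DecidableRel (E n t)] (i n : ℕ) : Set ℕ :=
  {x | ∃ t, i ∈ reachList (E n) n x.unpair.2 x.unpair.1 t}

section ReachCol

variable {E : ℕ → ℕ → ℕ → ℕ → Prop} [∀ n t, DecidableRel (E n t)] {F : ℕ → ℕ → Prop}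

theorem reachCol_subset {i j n : ℕ} (hij : ∃ᶠ t in atTop, E n t i j) (hj : j < n) :
    reachCol E i n ⊆ reachCol E j n := fun _ ⟨_, hi⟩ =>
  exists_mem_reachList_of_frequently hij hj hi

theorem eventually_reachCol_eq (hsymm : ∀ n t u v, E n t u v → E n t v u) {i j : ℕ}
    (hij : ∀ᶠ n in atTop, ∃ᶠ t in atTop, E n t i j) :
    ∀ᶠ n in atTop, reachCol E i n = reachCol E j n := by
  filter_upwards [hij, eventually_gt_atTop i, eventually_gt_atTop j] with n hn hi hj
  exact (reachCol_subset hn hj).antisymm (reachCol_subset (hn.mono fun t => hsymm n t i j) hi)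

theorem reachCol_ne (hF : Equivalence F) (hsparse : ∀ n, ∀ᶠ t in atTop, ∀ u v, E n t u v → F u v)
    {i j : ℕ} (hij : ¬ F i j) (n : ℕ) : reachCol E i n ≠ reachCol E j n := by
  obtain ⟨S, hS⟩ := eventually_atTop.1 (hsparse n)
  intro heq
  have hi : Nat.pair i S ∈ reachCol E i n := ⟨0, by simpa using start_mem_reachList 0⟩
  obtain ⟨t, hj⟩ := heq ▸ hi
  simp only [Nat.unpair_pair] at hj
  exact hij (mem_reachList_induction (F i) (hF.refl i)
    (fun t ht u v huv hiu => hF.trans hiu (hS t ht.le u v huv)) hj)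

theorem iff_eventually_reachCol_eq (hF : Equivalence F)
    (hsymm : ∀ n t u v, E n t u v → E n t v u)
    (hdense : ∀ u v, F u v → ∀ᶠ n in atTop, ∃ᶠ t in atTop, E n t u v)
    (hsparse : ∀ n, ∀ᶠ t in atTop, ∀ u v, E n t u v → F u v) (i j : ℕ) :
    F i j ↔ ∀ᶠ n in atTop, reachCol E i n = reachCol E j n := by
  refine ⟨fun hij => eventually_reachCol_eq hsymm (hdense i j hij), fun h => ?_⟩
  by_contra hij
  obtain ⟨n, hn⟩ := h.exists
  exact reachCol_ne hF hsparse hij n hn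

end ReachCol

open Primrec in
theorem primrec_reachList {E : ℕ → ℕ → ℕ → ℕ → Prop} [∀ n t, DecidableRel (E n t)]
    (hE : PrimrecPred fun p : ℕ × ℕ × ℕ × ℕ => E p.1 p.2.1 p.2.2.1 p.2.2.2) :
    Primrec fun p : (ℕ × ℕ × ℕ) × ℕ => reachList (E p.1.1) p.1.1 p.1.2.1 p.1.2.2 p.2 := by
  have hstep : PrimrecRel fun (v : ℕ) (q : (ℕ × ℕ × ℕ) × ℕ × List ℕ) =>
      q.1.2.1 ≤ q.2.1 ∧ ∃ u ∈ q.2.2, E q.1.1 (q.2.1 + 1) u v := by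
    have hedge : PrimrecRel fun (u : ℕ) (w : ℕ × (ℕ × ℕ × ℕ) × ℕ × List ℕ) =>
        E w.2.1.1 (w.2.2.1 + 1) u w.1 :=
      hE.comp ((fst.comp (fst.comp (snd.comp snd))).pair
        ((succ.comp (fst.comp (snd.comp (snd.comp snd)))).pair (fst.pair (fst.comp snd))))
    exact (nat_le.comp (fst.comp (snd.comp (fst.comp snd))) (fst.comp (snd.comp snd))).and
      (PrimrecRel.comp (R := fun (L : List ℕ) (w : ℕ × (ℕ × ℕ × ℕ) × ℕ × List ℕ) =>
          ∃ u ∈ L, E w.2.1.1 (w.2.2.1 + 1) u w.1)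
        hedge.exists_mem_list (snd.comp (snd.comp snd)) Primrec.id)
  have := Primrec.nat_rec (f := fun a : ℕ × ℕ × ℕ => [a.2.2])
    (g := fun a (q : ℕ × List ℕ) => q.2 ++ (List.range a.1).filter fun v =>
      a.2.1 ≤ q.1 ∧ ∃ u ∈ q.2, E a.1 (q.1 + 1) u v)
    (list_cons.comp (snd.comp snd) (const []))
    (list_append.comp (snd.comp snd)
      (hstep.listFilter.comp (list_range.comp (fst.comp fst)) Primrec.id))
  refine Primrec.of_eq this fun p => ?_
  induction p.2 with
  | zero => rfl
  | succ t ih => simp only [reachList, ← ih]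

open Primrec in
theorem exists_computable_W_eq {R : ℕ → ℕ → ℕ → Prop}
    (hR : PrimrecPred fun p : ℕ × ℕ × ℕ => R p.1 p.2.1 p.2.2) :
    ∃ f : ℕ → ℕ, Computable f ∧ ∀ i x, x ∈ W (f i) ↔ ∃ t, R i x t := by
  classical
  have hsearch : Partrec fun v : ℕ =>
      Nat.rfind fun t => Part.some (decide (R v.unpair.1 v.unpair.2 t)) :=
    Partrec.rfind (Computable₂.partrec₂ (Primrec.to_comp (hR.decide.comp
      ((fst.comp (unpair.comp fst)).pair ((snd.comp (unpair.comp fst)).pair snd)))))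
  obtain ⟨c, hc⟩ := exists_code.1 (Partrec.nat_iff.1 hsearch)
  refine ⟨fun i => encode (curry c i),
    (Primrec.encode.comp (primrec₂_curry.comp (const c) Primrec.id)).to_comp, fun i x => ?_⟩
  simp only [W, Set.mem_ofPred_eq, Denumerable.ofNat_encode, eval_curry, hc, Nat.unpair_pair]
  exact Nat.rfind_dom.trans (by simp)

section SyncEdge

variable (R : ℕ × ℕ × ℕ → ℕ → ℕ → Bool)

def syncEdge (n t u v : ℕ) : Prop :=
  u < n ∧ v < n ∧ ∃ a < n, Expansionary R (u, v, a) t ∨ Expansionary R (v, u, a) t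

instance (n t : ℕ) : DecidableRel (syncEdge R n t) := fun _ _ =>
  inferInstanceAs (Decidable (_ ∧ _ ∧ _))

variable {R}

theorem syncEdge_symm {n t u v : ℕ} : syncEdge R n t u v → syncEdge R n t v u :=
  fun ⟨hu, hv, a, ha, h⟩ => ⟨hv, hu, a, ha, h.symm⟩

theorem frequently_syncEdge {u v a : ℕ} (h : ∀ b, ∃ c, R (u, v, a) b c = true) :
    ∀ᶠ n in atTop, ∃ᶠ t in atTop, syncEdge R n t u v := by
  filter_upwards [eventually_gt_atTop u, eventually_gt_atTop v, eventually_gt_atTop a]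
    with n hu hv ha
  exact ((frequently_expansionary_iff _).2 h).mono fun t ht => ⟨hu, hv, a, ha, Or.inl ht⟩

theorem eventually_syncEdge_imp {F : ℕ → ℕ → Prop} (hF : ∀ x y, F x y → F y x)
    (hFR : ∀ x y, F x y ↔ ∃ a, ∀ b, ∃ c, R (x, y, a) b c = true) (n : ℕ) :
    ∀ᶠ t in atTop, ∀ u v, syncEdge R n t u v → F u v := by
  have key : ∀ u v a, ∀ᶠ t in atTop,
      ¬F u v → ¬Expansionary R (u, v, a) t ∧ ¬Expansionary R (v, u, a) t := by
    intro u v a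
    by_cases huv : F u v
    · exact Eventually.of_forall fun _ h => absurd huv h
    have h₁ : ¬∃ᶠ t in atTop, Expansionary R (u, v, a) t := by
      rw [frequently_expansionary_iff]; exact fun h => huv ((hFR u v).2 ⟨a, h⟩)
    have h₂ : ¬∃ᶠ t in atTop, Expansionary R (v, u, a) t := by
      rw [frequently_expansionary_iff]; exact fun h => huv (hF v u ((hFR v u).2 ⟨a, h⟩))
    exact ((not_frequently.1 h₁).and (not_frequently.1 h₂)).mono fun _ h _ => h
  have hall : ∀ᶠ t in atTop, ∀ u ∈ Set.Iio n, ∀ v ∈ Set.Iio n, ∀ a ∈ Set.Iio n,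
      ¬F u v → ¬Expansionary R (u, v, a) t ∧ ¬Expansionary R (v, u, a) t := by
    simp only [(Set.finite_Iio n).eventually_all]
    exact fun u _ v _ a _ => key u v a
  filter_upwards [hall] with t ht u v ⟨hu, hv, a, ha, hexp⟩
  by_contra huv
  obtain ⟨h₁, h₂⟩ := ht u hu v hv a ha huv
  exact hexp.elim h₁ h₂

open Primrec in
theorem primrecPred_syncEdge (hR : Primrec fun p : (ℕ × ℕ × ℕ) × ℕ × ℕ => R p.1 p.2.1 p.2.2) :
    PrimrecPred fun p : ℕ × ℕ × ℕ × ℕ => syncEdge R p.1 p.2.1 p.2.2.1 p.2.2.2 := by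
  have hE := primrecRel_expansionary hR
  have hu : Primrec fun p : ℕ × ℕ × ℕ × ℕ => p.2.2.1 := fst.comp (snd.comp snd)
  have hv : Primrec fun p : ℕ × ℕ × ℕ × ℕ => p.2.2.2 := snd.comp (snd.comp snd)
  have ht : Primrec fun p : ℕ × ℕ × ℕ × ℕ => p.2.1 := fst.comp snd
  have hexp : PrimrecRel fun (a : ℕ) (p : ℕ × ℕ × ℕ × ℕ) =>
      Expansionary R (p.2.2.1, p.2.2.2, a) p.2.1 ∨ Expansionary R (p.2.2.2, p.2.2.1, a) p.2.1 :=
    (hE.comp ((hu.comp snd).pair ((hv.comp snd).pair fst)) (ht.comp snd)).or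
      (hE.comp ((hv.comp snd).pair ((hu.comp snd).pair fst)) (ht.comp snd))
  exact (nat_lt.comp hu fst).and ((nat_lt.comp hv fst).and
    ((PrimrecRel.comp (R := fun (L : List ℕ) (p : ℕ × ℕ × ℕ × ℕ) => ∃ a ∈ L,
        Expansionary R (p.2.2.1, p.2.2.2, a) p.2.1 ∨ Expansionary R (p.2.2.2, p.2.2.1, a) p.2.1)
      hexp.exists_mem_list (list_range.comp fst) Primrec.id).of_eq fun _ => by simp))

end SyncEdge

open Primrec in
theorem exists_computable_reduction_to_E1ce {F : ℕ → ℕ → Prop} (hF : Equivalence F)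
    (hS : Sigma03Rel F) : ∃ f : ℕ → ℕ, Computable f ∧ ∀ i j, F i j ↔ E1ce (f i) (f j) := by
  obtain ⟨R, hR, hFR⟩ := hS.exists_primrec
  have hreach : Primrec fun p : ℕ × ℕ × ℕ => reachList (syncEdge R p.2.1.unpair.1)
      p.2.1.unpair.1 p.2.1.unpair.2.unpair.2 p.2.1.unpair.2.unpair.1 p.2.2 := by
    have hx : Primrec fun p : ℕ × ℕ × ℕ => p.2.1.unpair := unpair.comp (fst.comp snd)
    have hsz := unpair.comp (snd.comp hx)
    exact (primrec_reachList (primrecPred_syncEdge hR)).comp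
      (((fst.comp hx).pair ((snd.comp hsz).pair (fst.comp hsz))).pair (snd.comp snd))
  obtain ⟨f, hf, hW⟩ := exists_computable_W_eq (R := fun i x t =>
      i ∈ reachList (syncEdge R x.unpair.1) x.unpair.1 x.unpair.2.unpair.2 x.unpair.2.unpair.1 t)
    ((Primrec.eq.exists_mem_list.comp hreach fst).of_eq fun _ => by simp)
  have hcol (i n : ℕ) : column (W (f i)) n = reachCol (syncEdge R) i n :=
    Set.ext fun x => by simp [column, reachCol, hW]
  refine ⟨f, hf, fun i j => ?_⟩
  simp only [E1ce_iff_eventually, hcol]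
  refine iff_eventually_reachCol_eq (E := syncEdge R) hF (fun _ _ _ _ => syncEdge_symm)
    (fun u v huv => ?_) (eventually_syncEdge_imp (fun _ _ => hF.symm) hFR) i j
  obtain ⟨a, ha⟩ := (hFR u v).1 huv
  exact frequently_syncEdge ha

/-- `E₁^{ce}` is a Σ⁰₃-complete equivalence relation. -/
theorem stmt_16 :
    Equivalence E1ce ∧ Sigma03Rel E1ce ∧
    ∀ F : ℕ → ℕ → Prop, Equivalence F → Sigma03Rel F →
      ∃ f : ℕ → ℕ, Computable f ∧ ∀ i j, F i j ↔ E1ce (f i) (f j) :=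
  ⟨equivalence_E1ce, sigma03Rel_E1ce, fun _ hF hS => exists_computable_reduction_to_E1ce hF hS⟩
end
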